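/- Let q ∈ C¹[0,π], h ∈ ℝ, and let φ(·,λ) solve −y''+qy = λy with φ(0,λ) = h₁ − λ, φ'(0,λ) = h₂ − λh. Write λ = s². Then φ(x,λ) = −s²cos(sx) − (h + (1/2)∫_0^x q(t)dt)·s·sin(sx) + O(e^{|Im s| x}) uniformly for x ∈ [0,π] as |s| → ∞. -/

import Mathlib

open Real Complex intervalIntegral

/-!
Write `λ = s²`, `τ = |Im s|` and `P = h + ½∫₀ˣ q`. The leading term `ψ = -s² cos(sx) - P s sin(sx)`
has the same initial data as `φ` up to `O(1)`, and because `P' = q/2` it solves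
`ψ'' = (q - s²)ψ - s sin(sx)(q'/2 - qP)`: the `s² cos` terms cancel and the defect is only
`O(|s| e^{τx})`. The remainder `r = φ - ψ` therefore satisfies `r'' + s²r = qr + O(|s| e^{τx})`
with bounded initial data; the variation-of-constants formula turns this into the Volterra
inequality `|r(x)| e^{-τx} ≤ A + B ∫₀ˣ |r(t)| e^{-τt} dt`, and Gronwall's lemma bounds `r` by
`C e^{τx}`. Since `q` is only `C¹` on `[0, π]`, it is first extended to a `C¹` function on `ℝ`.
-/

open Set

namespace Complex

theorem norm_exp_mul_I_le_exp_abs_im (z : ℂ) : ‖cexp (z * I)‖ ≤ Real.exp |z.im| := by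
  rw [norm_exp]
  gcongr
  simpa using neg_le_abs z.im

theorem norm_sin_le_exp_abs_im (z : ℂ) : ‖sin z‖ ≤ Real.exp |z.im| := by
  have h₁ := norm_exp_mul_I_le_exp_abs_im z
  have h₂ : ‖cexp (-z * I)‖ ≤ Real.exp |z.im| := by
    simpa using norm_exp_mul_I_le_exp_abs_im (-z)
  rw [sin, norm_div, norm_mul, norm_I, mul_one, Complex.norm_two]
  linarith [norm_sub_le (cexp (-z * I)) (cexp (z * I))]

theorem norm_cos_le_exp_abs_im (z : ℂ) : ‖cos z‖ ≤ Real.exp |z.im| := by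
  have h₁ := norm_exp_mul_I_le_exp_abs_im z
  have h₂ : ‖cexp (-z * I)‖ ≤ Real.exp |z.im| := by
    simpa using norm_exp_mul_I_le_exp_abs_im (-z)
  rw [cos, norm_div, Complex.norm_two]
  linarith [norm_add_le (cexp (z * I)) (cexp (-z * I))]

theorem norm_sin_mul_ofReal_le (s : ℂ) {x : ℝ} (hx : 0 ≤ x) :
    ‖sin (s * x)‖ ≤ Real.exp (|s.im| * x) := by
  simpa [abs_mul, abs_of_nonneg hx] using norm_sin_le_exp_abs_im (s * x)

theorem norm_cos_mul_ofReal_le (s : ℂ) {x : ℝ} (hx : 0 ≤ x) :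
    ‖cos (s * x)‖ ≤ Real.exp (|s.im| * x) := by
  simpa [abs_mul, abs_of_nonneg hx] using norm_cos_le_exp_abs_im (s * x)

end Complex

theorem hasDerivAt_cos_mul_ofReal (s : ℂ) (x : ℝ) :
    HasDerivAt (fun y : ℝ => cos (s * y)) (-s * sin (s * x)) x :=
  ((hasDerivAt_id' (x : ℂ)).const_mul s).ccos.comp_ofReal.congr_deriv (by ring)

theorem hasDerivAt_sin_mul_ofReal (s : ℂ) (x : ℝ) :
    HasDerivAt (fun y : ℝ => sin (s * y)) (s * cos (s * x)) x :=
  ((hasDerivAt_id' (x : ℂ)).const_mul s).csin.comp_ofReal.congr_deriv (by ring)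

theorem ContDiffOn.exists_hasDerivAt_eqOn_Icc {E : Type*} [NormedAddCommGroup E]
    [NormedSpace ℝ E] [CompleteSpace E] {f : ℝ → E} {a b : ℝ} (hab : a < b)
    (hf : ContDiffOn ℝ 1 f (Icc a b)) :
    ∃ F F' : ℝ → E, Continuous F' ∧ (∀ x, HasDerivAt F (F' x) x) ∧ EqOn F f (Icc a b) := by
  set f' := derivWithin f (Icc a b)
  have hf' : ContinuousOn f' (Icc a b) := hf.continuousOn_derivWithin (uniqueDiffOn_Icc hab) le_rfl
  set F' := IccExtend hab.le ((Icc a b).domRestrict f')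
  have hF' : Continuous F' := continuous_IccExtend_iff.2 hf'.domRestrict
  have hF : ∀ x, HasDerivAt (fun x => f a + ∫ t in a..x, F' t) (F' x) x := fun x =>
    (hF'.integral_hasStrictDerivAt a x).hasDerivAt.const_add (f a)
  refine ⟨_, F', hF', hF, fun x hx => ?_⟩
  refine eq_of_has_deriv_right_eq (fun y _ => (hF y).hasDerivWithinAt) (fun y hy => ?_)
    (fun y _ => (hF y).continuousAt.continuousWithinAt) hf.continuousOn (by simp) x hx
  rw [show F' y = f' y from IccExtend_of_mem _ _ (Ico_subset_Icc_self hy)]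
  exact (hf.differentiableOn one_ne_zero y (Ico_subset_Icc_self hy)).hasDerivWithinAt
    |>.mono_of_mem_nhdsWithin (Icc_mem_nhdsGE_of_mem hy)

theorem IsCompact.exists_pos_bound_of_continuousOn {α E : Type*} [TopologicalSpace α]
    [SeminormedAddCommGroup E] {s : Set α} (hs : IsCompact s) {f : α → E}
    (hf : ContinuousOn f s) : ∃ C > 0, ∀ x ∈ s, ‖f x‖ ≤ C :=
  let ⟨C, hC₀, hC⟩ := (hs.image_of_continuousOn hf).isBounded.exists_pos_norm_le
  ⟨C, hC₀, fun _ hx => hC _ (mem_image_of_mem f hx)⟩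

theorem le_mul_exp_of_le_add_mul_integral {u : ℝ → ℝ} {a b A B : ℝ} (hB : 0 ≤ B)
    (hu : ContinuousOn u (Icc a b)) (h : ∀ x ∈ Icc a b, u x ≤ A + B * ∫ t in a..x, u t) :
    ∀ x ∈ Icc a b, u x ≤ A * Real.exp (B * (x - a)) := by
  intro x hx
  have hab : a ≤ b := hx.1.trans hx.2
  set U : ℝ → ℝ := fun x => ∫ t in a..x, u t
  have hUc : ContinuousOn U (Icc a b) := by
    have := continuousOn_primitive_interval (μ := MeasureTheory.volume)
      (uIcc_of_le hab ▸ hu.integrableOn_Icc)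
    rwa [uIcc_of_le hab] at this
  have hU : ∀ y ∈ Ioo a b, HasDerivAt U (u y) y := fun y hy =>
    integral_hasDerivAt_right
      ((hu.mono (Icc_subset_Icc le_rfl hy.2.le)).intervalIntegrable_of_Icc hy.1.le)
      ((hu.mono Ioo_subset_Icc_self).stronglyMeasurableAtFilter isOpen_Ioo y hy)
      (hu.continuousAt (Icc_mem_nhds hy.1 hy.2))
  -- `e^{-B(y-a)} (A + B U y)` has derivative `B e^{-B(y-a)} (u y - (A + B U y)) ≤ 0`.
  have hV : AntitoneOn (fun y => Real.exp (-(B * (y - a))) * (A + B * U y)) (Icc a b) := by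
    refine antitoneOn_of_hasDerivWithinAt_nonpos (convex_Icc a b) (by fun_prop)
      (f' := fun y => B * Real.exp (-(B * (y - a))) * (u y - (A + B * U y))) ?_ ?_
    all_goals rw [interior_Icc]
    · intro y hy
      have := ((((hasDerivAt_id' y).sub_const a).const_mul B).neg.exp).mul
        (((hU y hy).const_mul B).const_add A)
      exact (this.congr_deriv (by simp only [Pi.neg_apply, mul_one]; ring)).hasDerivWithinAt
    · intro y hy
      have := h y (Ioo_subset_Icc_self hy)
      exact mul_nonpos_of_nonneg_of_nonpos (by positivity) (by linarith)
  have hVx := hV ⟨le_rfl, hab⟩ hx hx.1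
  simp only [U, sub_self, mul_zero, neg_zero, Real.exp_zero, integral_same, add_zero,
    one_mul] at hVx
  rw [Real.exp_neg, inv_mul_le_iff₀ (Real.exp_pos _)] at hVx
  linarith [h x hx]

theorem mul_eq_add_integral_sin_mul_of_hasDerivAt {s : ℂ} {b : ℝ} {r r' g : ℝ → ℂ}
    (hr : ∀ x ∈ Icc 0 b, HasDerivAt r (r' x) x)
    (hr' : ∀ x ∈ Icc 0 b, HasDerivAt r' (g x - s ^ 2 * r x) x) (hg : ContinuousOn g (Icc 0 b)) :
    ∀ x ∈ Icc 0 b, s * r x =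
      s * r 0 * cos (s * x) + r' 0 * sin (s * x) + ∫ t in 0..x, sin (s * (x - t)) * g t := by
  intro x hx
  have hsub : uIcc 0 x ⊆ Icc 0 b := by
    rw [uIcc_of_le hx.1]
    exact Icc_subset_Icc le_rfl hx.2
  have hF : ∀ t ∈ uIcc 0 x, HasDerivAt
      (fun t : ℝ => sin (s * (x - t)) * r' t + s * cos (s * (x - t)) * r t)
      (sin (s * (x - t)) * g t) t := by
    intro t ht
    have hlin : HasDerivAt (fun t : ℝ => s * (x - t)) (-s) t := by
      simpa using ((hasDerivAt_id t).ofReal_comp.const_sub (x : ℂ)).const_mul s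
    have := (((Complex.hasDerivAt_sin _).comp t hlin).mul (hr' t (hsub ht))).add
      ((((Complex.hasDerivAt_cos _).comp t hlin).const_mul s).mul (hr t (hsub ht)))
    exact this.congr_deriv (by simp only [Function.comp]; ring)
  have hint : IntervalIntegrable (fun t => sin (s * (x - t)) * g t) MeasureTheory.volume 0 x :=
    ContinuousOn.intervalIntegrable (by fun_prop) |>.mul_continuousOn (hg.mono hsub)
  rw [integral_eq_sub_of_hasDerivAt hF hint]
  simp only [sub_self, mul_zero, Complex.sin_zero, zero_mul, Complex.cos_zero, mul_one, zero_add,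
    ofReal_zero, sub_zero]
  ring

theorem norm_integral_sin_mul_le (s : ℂ) {x : ℝ} (hx : 0 ≤ x) {g : ℝ → ℂ}
    (hg : ContinuousOn g (Icc 0 x)) :
    ‖∫ t in 0..x, sin (s * (x - t)) * g t‖ ≤
      Real.exp (|s.im| * x) * ∫ t in 0..x, ‖g t‖ * Real.exp (-(|s.im| * t)) := by
  rw [← integral_const_mul]
  refine (norm_integral_le_integral_norm hx).trans (integral_mono_on hx ?_ ?_ fun t ht => ?_)
  · exact (ContinuousOn.norm (by fun_prop)).intervalIntegrable_of_Icc hx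
  · exact ContinuousOn.intervalIntegrable_of_Icc hx (by fun_prop)
  · have := norm_sin_mul_ofReal_le s (sub_nonneg.2 ht.2)
    push_cast at this
    calc ‖sin (s * (x - t)) * g t‖ ≤ Real.exp (|s.im| * (x - t)) * ‖g t‖ := by
          rw [norm_mul]; gcongr
      _ = _ := by rw [mul_sub, sub_eq_add_neg, Real.exp_add]; ring

theorem norm_add_integral_sin_mul_le (s r₀ r₁ : ℂ) {x : ℝ} (hx : 0 ≤ x) {g : ℝ → ℂ}
    (hg : ContinuousOn g (Icc 0 x)) :
    ‖s * r₀ * cos (s * x) + r₁ * sin (s * x) + ∫ t in 0..x, sin (s * (x - t)) * g t‖ ≤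
      Real.exp (|s.im| * x) *
        (‖s‖ * ‖r₀‖ + ‖r₁‖ + ∫ t in 0..x, ‖g t‖ * Real.exp (-(|s.im| * t))) := by
  calc _ ≤ ‖s * r₀ * cos (s * x)‖ + ‖r₁ * sin (s * x)‖ +
        ‖∫ t in 0..x, sin (s * (x - t)) * g t‖ := norm_add₃_le
    _ ≤ ‖s‖ * ‖r₀‖ * Real.exp (|s.im| * x) + ‖r₁‖ * Real.exp (|s.im| * x) +
        Real.exp (|s.im| * x) * ∫ t in 0..x, ‖g t‖ * Real.exp (-(|s.im| * t)) := by
      rw [norm_mul, norm_mul, norm_mul]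
      gcongr
      exacts [norm_cos_mul_ofReal_le s hx, norm_sin_mul_ofReal_le s hx,
        norm_integral_sin_mul_le s hx hg]
    _ = _ := by ring

theorem norm_mul_exp_neg_le_add_mul_integral {s : ℂ} (hs : 1 ≤ ‖s‖) {b B M : ℝ} (hB : 0 ≤ B)
    (hM : 0 ≤ M) {r g : ℝ → ℂ} {r₀ r₁ : ℂ} (hr : ContinuousOn r (Icc 0 b))
    (hg : ContinuousOn g (Icc 0 b))
    (hrep : ∀ x ∈ Icc 0 b, s * r x =
      s * r₀ * cos (s * x) + r₁ * sin (s * x) + ∫ t in 0..x, sin (s * (x - t)) * g t)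
    (hgB : ∀ t ∈ Icc 0 b, ‖g t‖ ≤ B * ‖r t‖ + M * ‖s‖ * Real.exp (|s.im| * t)) :
    ∀ x ∈ Icc 0 b, ‖r x‖ * Real.exp (-(|s.im| * x)) ≤
      ‖r₀‖ + ‖r₁‖ + M * b + B * ∫ t in 0..x, ‖r t‖ * Real.exp (-(|s.im| * t)) := by
  set τ := |s.im|
  set u : ℝ → ℝ := fun x => ‖r x‖ * Real.exp (-(τ * x))
  intro x hx
  have hsub : Icc 0 x ⊆ Icc 0 b := Icc_subset_Icc le_rfl hx.2
  have hgx := hg.mono hsub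
  have hux : ContinuousOn u (Icc 0 x) := (hr.mono hsub).norm.mul (by fun_prop)
  have hU : 0 ≤ ∫ t in 0..x, u t := integral_nonneg hx.1 fun t _ => by positivity
  have hI : ∫ t in 0..x, ‖g t‖ * Real.exp (-(τ * t)) ≤ B * (∫ t in 0..x, u t) + M * ‖s‖ * x := by
    have := integral_mono_on hx.1
      (ContinuousOn.intervalIntegrable_of_Icc (μ := MeasureTheory.volume) hx.1 (by fun_prop))
      (((hux.intervalIntegrable_of_Icc hx.1).const_mul B).add intervalIntegrable_const)
      fun t ht => show ‖g t‖ * Real.exp (-(τ * t)) ≤ B * u t + M * ‖s‖ by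
        calc _ ≤ (B * ‖r t‖ + M * ‖s‖ * Real.exp (τ * t)) * Real.exp (-(τ * t)) := by
              gcongr; exact hgB t (hsub ht)
          _ = _ := by
              rw [add_mul, mul_assoc (M * ‖s‖), ← Real.exp_add, add_neg_cancel, Real.exp_zero]
              ring
    rwa [integral_add ((hux.intervalIntegrable_of_Icc hx.1).const_mul B)
      intervalIntegrable_const, integral_const_mul, integral_const, sub_zero, smul_eq_mul,
      mul_comm x] at this
  have hsr : ‖s‖ * ‖r x‖ ≤
      ‖s‖ * (Real.exp (τ * x) * (‖r₀‖ + ‖r₁‖ + M * b + B * ∫ t in 0..x, u t)) := by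
    have h₁ : ‖r₁‖ ≤ ‖s‖ * ‖r₁‖ := le_mul_of_one_le_left (norm_nonneg _) hs
    have h₂ : B * ∫ t in 0..x, u t ≤ ‖s‖ * (B * ∫ t in 0..x, u t) :=
      le_mul_of_one_le_left (by positivity) hs
    have h₃ : M * ‖s‖ * x ≤ ‖s‖ * (M * b) := by
      rw [mul_right_comm, mul_comm ‖s‖]; gcongr; exact hx.2
    rw [← norm_mul, hrep x hx, mul_left_comm]
    refine (norm_add_integral_sin_mul_le s r₀ r₁ hx.1 hgx).trans ?_
    gcongr
    linarith
  rw [Real.exp_neg, ← div_eq_mul_inv, div_le_iff₀ (Real.exp_pos _), mul_comm]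
  exact le_of_mul_le_mul_left hsr (by linarith)

theorem norm_le_of_hasDerivAt_sub_sq_mul_add {s : ℂ} (hs : 1 ≤ ‖s‖) {b B M : ℝ}
    (hB : 0 ≤ B) (hM : 0 ≤ M) {p f r r' : ℝ → ℂ}
    (hr : ∀ x ∈ Icc 0 b, HasDerivAt r (r' x) x)
    (hr' : ∀ x ∈ Icc 0 b, HasDerivAt r' ((p x - s ^ 2) * r x + f x) x)
    (hp : ContinuousOn p (Icc 0 b)) (hf : ContinuousOn f (Icc 0 b))
    (hpB : ∀ x ∈ Icc 0 b, ‖p x‖ ≤ B)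
    (hfM : ∀ x ∈ Icc 0 b, ‖f x‖ ≤ M * ‖s‖ * Real.exp (|s.im| * x)) :
    ∀ x ∈ Icc 0 b,
      ‖r x‖ ≤ (‖r 0‖ + ‖r' 0‖ + M * b) * Real.exp (B * x) * Real.exp (|s.im| * x) := by
  have hrc : ContinuousOn r (Icc 0 b) := fun x hx => (hr x hx).continuousAt.continuousWithinAt
  have hgc : ContinuousOn (fun x => p x * r x + f x) (Icc 0 b) := (hp.mul hrc).add hf
  have hvolterra := norm_mul_exp_neg_le_add_mul_integral hs hB hM hrc hgc
    (mul_eq_add_integral_sin_mul_of_hasDerivAt hr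
      (fun x hx => (hr' x hx).congr_deriv (by ring)) hgc)
    fun t ht => (norm_add_le _ _).trans (add_le_add
      (by rw [norm_mul]; gcongr; exact hpB t ht) (hfM t ht))
  intro x hx
  have := le_mul_exp_of_le_add_mul_integral hB (hrc.norm.mul (by fun_prop)) hvolterra x hx
  rw [sub_zero] at this
  calc ‖r x‖ = ‖r x‖ * Real.exp (-(|s.im| * x)) * Real.exp (|s.im| * x) := by
        rw [mul_assoc, ← Real.exp_add, neg_add_cancel, Real.exp_zero, mul_one]
    _ ≤ _ := mul_le_mul_of_nonneg_right this (Real.exp_pos _).le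

noncomputable def leadingTerm (P : ℝ → ℂ) (s : ℂ) (x : ℝ) : ℂ :=
  -s ^ 2 * cos (s * x) - P x * s * sin (s * x)

theorem hasDerivAt_leadingTerm {P p : ℝ → ℂ} {x : ℝ} (hP : HasDerivAt P (p x / 2) x) (s : ℂ) :
    HasDerivAt (leadingTerm P s)
      (s ^ 3 * sin (s * x) - p x / 2 * s * sin (s * x) - P x * s ^ 2 * cos (s * x)) x :=
  (((hasDerivAt_cos_mul_ofReal s x).const_mul (-s ^ 2)).sub
    ((hP.mul_const s).mul (hasDerivAt_sin_mul_ofReal s x))).congr_deriv (by ring)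

theorem hasDerivAt_leadingTerm_deriv {P p : ℝ → ℂ} {p' : ℂ} {x : ℝ}
    (hP : HasDerivAt P (p x / 2) x) (hp : HasDerivAt p p' x) (s : ℂ) :
    HasDerivAt
      (fun y : ℝ => s ^ 3 * sin (s * y) - p y / 2 * s * sin (s * y) - P y * s ^ 2 * cos (s * y))
      ((p x - s ^ 2) * leadingTerm P s x - s * sin (s * x) * (p' / 2 - p x * P x)) x := by
  have := (((hasDerivAt_sin_mul_ofReal s x).const_mul (s ^ 3)).sub
    (((hp.div_const 2).mul_const s).mul (hasDerivAt_sin_mul_ofReal s x))).sub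
    ((hP.mul_const (s ^ 2)).mul (hasDerivAt_cos_mul_ofReal s x))
  exact this.congr_deriv (by simp only [leadingTerm]; ring)

theorem norm_sub_leadingTerm_le {s : ℂ} (hs : 1 ≤ ‖s‖) {b B M : ℝ} (hB : 0 ≤ B) (hM : 0 ≤ M)
    {y y' p p' P : ℝ → ℂ} (hy : ∀ x ∈ Icc 0 b, HasDerivAt y (y' x) x)
    (hy' : ∀ x ∈ Icc 0 b, HasDerivAt y' ((p x - s ^ 2) * y x) x)
    (hP : ∀ x ∈ Icc 0 b, HasDerivAt P (p x / 2) x) (hp : ∀ x ∈ Icc 0 b, HasDerivAt p (p' x) x)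
    (hp' : ContinuousOn p' (Icc 0 b)) (hpB : ∀ x ∈ Icc 0 b, ‖p x‖ ≤ B)
    (hpM : ∀ x ∈ Icc 0 b, ‖p' x / 2 - p x * P x‖ ≤ M) :
    ∀ x ∈ Icc 0 b, ‖y x - leadingTerm P s x‖ ≤
      (‖y 0 + s ^ 2‖ + ‖y' 0 + P 0 * s ^ 2‖ + M * b) * Real.exp (B * x) *
        Real.exp (|s.im| * x) := by
  intro x hx
  have hpc : ContinuousOn p (Icc 0 b) := fun x hx => (hp x hx).continuousAt.continuousWithinAt
  have hPc : ContinuousOn P (Icc 0 b) := fun x hx => (hP x hx).continuousAt.continuousWithinAt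
  have hfM : ∀ t ∈ Icc 0 b, ‖s * sin (s * t) * (p' t / 2 - p t * P t)‖ ≤
      M * ‖s‖ * Real.exp (|s.im| * t) := by
    intro t ht
    rw [norm_mul, norm_mul, mul_right_comm, mul_comm M]
    gcongr
    exacts [hpM t ht, norm_sin_mul_ofReal_le s ht.1]
  simpa [leadingTerm] using norm_le_of_hasDerivAt_sub_sq_mul_add hs hB hM
    (r := fun x => y x - leadingTerm P s x)
    (fun x hx => (hy x hx).sub (hasDerivAt_leadingTerm (hP x hx) s))
    (fun x hx => ((hy' x hx).sub (hasDerivAt_leadingTerm_deriv (hP x hx) (hp x hx) s)).congr_deriv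
      (by ring))
    hpc (by fun_prop) hpB hfM x hx

theorem stmt_12 (q : ℝ → ℝ) (hq : ContDiffOn ℝ 1 q (Set.Icc 0 Real.pi))
    (h h₁ h₂ : ℝ) (φ : ℂ → ℝ → ℂ) (φ' : ℂ → ℝ → ℂ)
    (hderiv : ∀ lam : ℂ, ∀ x : ℝ, HasDerivAt (φ lam) (φ' lam x) x)
    (hderiv' : ∀ lam : ℂ, ∀ x : ℝ,
      HasDerivAt (φ' lam) ((q x : ℂ) * φ lam x - lam * φ lam x) x)
    (hinit0 : ∀ lam : ℂ, φ lam 0 = (h₁ : ℂ) - lam)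
    (hinit1 : ∀ lam : ℂ, φ' lam 0 = (h₂ : ℂ) - lam * h) :
    ∃ C R : ℝ, 0 < C ∧ 0 < R ∧ ∀ s : ℂ, R ≤ ‖s‖ →
      ∀ x ∈ Set.Icc (0 : ℝ) Real.pi,
        ‖φ (s ^ 2) x
            + s ^ 2 * Complex.cos (s * x)
            + (((h : ℂ) + (1 / 2 : ℂ) * ((∫ t in (0 : ℝ)..x, q t : ℝ) : ℂ))
                * s * Complex.sin (s * x))‖
          ≤ C * Real.exp (|s.im| * x) := by
  obtain ⟨qe, qe', hqe'c, hqe, hq_eq⟩ := hq.exists_hasDerivAt_eqOn_Icc pi_pos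
  have hqec : Continuous qe := continuous_iff_continuousAt.2 fun x => (hqe x).continuousAt
  set P : ℝ → ℂ := fun y => h + (∫ t in 0..y, qe t : ℝ) / 2
  have hP : ∀ y, HasDerivAt P (qe y / 2) y := fun y =>
    (((hqec.integral_hasStrictDerivAt 0 y).hasDerivAt.ofReal_comp).div_const 2).const_add _
  have hPc : Continuous P := continuous_iff_continuousAt.2 fun y => (hP y).continuousAt
  obtain ⟨B, hB₀, hB⟩ := isCompact_Icc.exists_pos_bound_of_continuousOn (s := Icc 0 π)
    (continuous_ofReal.comp hqec).continuousOn
  obtain ⟨M, hM₀, hM⟩ := isCompact_Icc.exists_pos_bound_of_continuousOn (s := Icc 0 π)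
    (f := fun y => (qe' y : ℂ) / 2 - qe y * P y) (by fun_prop)
  refine ⟨(|h₁| + |h₂| + M * π) * Real.exp (B * π), 1, by positivity, one_pos,
    fun s hs x hx => ?_⟩
  have key := norm_sub_leadingTerm_le hs hB₀.le hM₀.le (fun y _ => hderiv (s ^ 2) y)
    (fun y hy => (hderiv' (s ^ 2) y).congr_deriv (by rw [← hq_eq hy]; ring)) (fun y _ => hP y)
    (fun y _ => (hqe y).ofReal_comp) (continuous_ofReal.comp hqe'c).continuousOn hB hM x hx
  have hr₀ : φ (s ^ 2) 0 + s ^ 2 = h₁ := by rw [hinit0]; ring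
  have hr₁ : φ' (s ^ 2) 0 + P 0 * s ^ 2 = h₂ := by
    simp only [hinit1, P, integral_same, ofReal_zero, zero_div, add_zero]; ring
  rw [hr₀, hr₁, norm_real, norm_real, norm_eq_abs, norm_eq_abs] at key
  have hint : ∫ t in 0..x, q t = ∫ t in 0..x, qe t :=
    integral_congr fun t ht => (hq_eq (uIcc_subset_Icc ⟨le_rfl, pi_pos.le⟩ hx ht)).symm
  calc _ = ‖φ (s ^ 2) x - leadingTerm P s x‖ := by
        rw [hint]; simp only [leadingTerm, P]; congr 1; ring
    _ ≤ _ := key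
    _ ≤ _ := by gcongr; exact hx.2
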